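/- arXiv:1603.05051 — 3 statements merged into one kernel-verified Lean document; each statement's English description precedes it below -/
import Mathlib

section
/- Let f, g ∈ L^2_{loc}(ℝ^N) and let η ∈ C_c^∞(ℝ^N) with ∫η = 1, η^ε(x) = ε^{−N}η(x/ε), and denote by f^ε = η^ε * f the mollification. Then for almost every x ∈ ℝ^N the commutator identity holds: (fg)^ε(x) − f^ε(x) g^ε(x) = ∫_{ℝ^N} η^ε(ξ) (f(x−ξ) − f(x)) (g(x−ξ) − g(x)) dξ − (f(x) − f^ε(x)) (g(x) − g^ε(x)). -/
open MeasureTheory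
open scoped ENNReal

/-- The rescaled mollification kernel `η^ε(x) = ε^{−N} η(x/ε)`. -/
noncomputable def mollKernel {N : ℕ} (η : EuclideanSpace ℝ (Fin N) → ℝ) (ε : ℝ) :
    EuclideanSpace ℝ (Fin N) → ℝ :=
  fun x => ε⁻¹ ^ N * η (ε⁻¹ • x)

/-- The mollification `w^ε = η^ε * w` (convolution). -/
noncomputable def mollify {N : ℕ} (η : EuclideanSpace ℝ (Fin N) → ℝ) (ε : ℝ)
    (w : EuclideanSpace ℝ (Fin N) → ℝ) : EuclideanSpace ℝ (Fin N) → ℝ :=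
  fun x => ∫ y, mollKernel η ε y * w (x - y)

/-- The Constantin–E–Titi commutator decomposition: for `f, g ∈ L²_loc(ℝ^N)`
and a mollifier `η` with `∫ η = 1`, for a.e. `x`,
`(fg)^ε(x) − f^ε(x) g^ε(x)
  = ∫ η^ε(ξ) (f(x−ξ) − f(x))(g(x−ξ) − g(x)) dξ − (f(x) − f^ε(x))(g(x) − g^ε(x))`. -/
theorem commutator_identity
    {N : ℕ} (f g : EuclideanSpace ℝ (Fin N) → ℝ)
    (hfm : AEStronglyMeasurable f volume) (hgm : AEStronglyMeasurable g volume)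
    (hf : ∀ K : Set (EuclideanSpace ℝ (Fin N)), IsCompact K →
      eLpNorm f 2 (volume.restrict K) < ∞)
    (hg : ∀ K : Set (EuclideanSpace ℝ (Fin N)), IsCompact K →
      eLpNorm g 2 (volume.restrict K) < ∞)
    (η : EuclideanSpace ℝ (Fin N) → ℝ)
    (hηsmooth : ContDiff ℝ (⊤ : ℕ∞) η) (hηcomp : HasCompactSupport η) (hηint : ∫ x, η x = 1)
    (ε : ℝ) (hε : 0 < ε) :
    ∀ᵐ x : EuclideanSpace ℝ (Fin N) ∂volume,
      mollify η ε (fun y => f y * g y) x - mollify η ε f x * mollify η ε g x =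
        (∫ ξ, mollKernel η ε ξ * ((f (x - ξ) - f x) * (g (x - ξ) - g x))) -
          (f x - mollify η ε f x) * (g x - mollify η ε g x) := by
  have hεinv : (ε : ℝ)⁻¹ ≠ 0 := inv_ne_zero hε.ne'
  -- continuity of the kernel
  have hφcont : Continuous (mollKernel η ε) :=
    continuous_const.mul (hηsmooth.continuous.comp (continuous_const_smul _))
  -- compact support of the kernel
  have hφsupp : HasCompactSupport (mollKernel η ε) := by
    have h1 : HasCompactSupport (fun x : EuclideanSpace ℝ (Fin N) => η (ε⁻¹ • x)) := by
      simpa [Function.comp_def] using hηcomp.comp_homeomorph (Homeomorph.smulOfNeZero (ε⁻¹ : ℝ) hεinv)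
    exact h1.mul_left
  -- total mass 1
  have hφint1 : ∫ ξ, mollKernel η ε ξ = 1 := by
    simp only [mollKernel]
    rw [integral_const_mul, MeasureTheory.Measure.integral_comp_smul volume η ε⁻¹,
      finrank_euclideanSpace_fin, hηint, smul_eq_mul, mul_one]
    rw [abs_of_nonneg (by positivity)]
    field_simp
  -- local integrability from L²loc
  have hloc : ∀ (h : EuclideanSpace ℝ (Fin N) → ℝ), AEStronglyMeasurable h volume →
      (∀ K : Set (EuclideanSpace ℝ (Fin N)), IsCompact K →
        eLpNorm h 2 (volume.restrict K) < ∞) → LocallyIntegrable h volume := by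
    intro h hm hK
    rw [locallyIntegrable_iff]
    intro K hKc
    haveI : IsFiniteMeasure (volume.restrict K) :=
      ⟨by rw [Measure.restrict_apply_univ]; exact hKc.measure_lt_top⟩
    exact MemLp.integrable one_le_two ⟨hm.restrict, hK K hKc⟩
  have hfloc := hloc f hfm hf
  have hgloc := hloc g hgm hg
  -- local integrability of the product via Hölder
  have hfgloc : LocallyIntegrable (fun y => f y * g y) volume := by
    rw [locallyIntegrable_iff]
    intro K hKc
    have hf2 : MemLp f 2 (volume.restrict K) := ⟨hfm.restrict, hf K hKc⟩
    have hg2 : MemLp g 2 (volume.restrict K) := ⟨hgm.restrict, hg K hKc⟩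
    have hh : MemLp (f • g) 1 (volume.restrict K) := by
      exact hg2.smul hf2
    exact memLp_one_iff_integrable.mp hh
  -- integrability of the convolution integrands
  have hconv : ∀ (h : EuclideanSpace ℝ (Fin N) → ℝ), LocallyIntegrable h volume →
      ∀ x : EuclideanSpace ℝ (Fin N),
        Integrable (fun ξ => mollKernel η ε ξ * h (x - ξ)) volume := by
    intro h hh x
    have := (hφsupp.convolutionExists_left (ContinuousLinearMap.mul ℝ ℝ) hφcont hh) x
    simpa [ConvolutionExistsAt] using this
  refine Filter.Eventually.of_forall fun x => ?_
  have h1 := hconv _ hfgloc x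
  have h2 := hconv _ hfloc x
  have h3 := hconv _ hgloc x
  have h4 : Integrable (mollKernel η ε) volume :=
    hφcont.integrable_of_hasCompactSupport hφsupp
  have key : (∫ ξ, mollKernel η ε ξ * ((f (x - ξ) - f x) * (g (x - ξ) - g x)))
      = (∫ ξ, mollKernel η ε ξ * (f (x - ξ) * g (x - ξ)))
        - f x * (∫ ξ, mollKernel η ε ξ * g (x - ξ))
        - g x * (∫ ξ, mollKernel η ε ξ * f (x - ξ)) + f x * g x := by
    rw [show (fun ξ : EuclideanSpace ℝ (Fin N) =>
        mollKernel η ε ξ * ((f (x - ξ) - f x) * (g (x - ξ) - g x))) =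
        (fun ξ => (mollKernel η ε ξ * (f (x - ξ) * g (x - ξ))
          - f x * (mollKernel η ε ξ * g (x - ξ))
          - g x * (mollKernel η ε ξ * f (x - ξ))) + (f x * g x) * mollKernel η ε ξ) from
        funext fun ξ => by ring]
    have e2 : Integrable (fun ξ => f x * (mollKernel η ε ξ * g (x - ξ))) volume :=
      h3.const_mul _
    have e3 : Integrable (fun ξ => g x * (mollKernel η ε ξ * f (x - ξ))) volume :=
      h2.const_mul _
    have e4 : Integrable (fun ξ => f x * g x * mollKernel η ε ξ) volume := h4.const_mul _
    have s1 : Integrable (fun ξ => mollKernel η ε ξ * (f (x - ξ) * g (x - ξ))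
        - f x * (mollKernel η ε ξ * g (x - ξ))) volume := h1.sub e2
    have s2 : Integrable (fun ξ => mollKernel η ε ξ * (f (x - ξ) * g (x - ξ))
        - f x * (mollKernel η ε ξ * g (x - ξ))
        - g x * (mollKernel η ε ξ * f (x - ξ))) volume := s1.sub e3
    rw [integral_add s2 e4, integral_sub s1 e3, integral_sub h1 e2,
      integral_const_mul, integral_const_mul, integral_const_mul, hφint1, mul_one]
  simp only [mollify]
  rw [key]
  ring
end

section
/- Let [a,b] ⊂ ℝ and let p ∈ C²([a,b]). Let ρ : ℝ^N → [a,b] be measurable, let η ∈ C_c^∞(ℝ^N) be a mollifier with η ≥ 0, ∫η = 1, and let ρ^ε = η^ε * ρ and (p∘ρ)^ε = η^ε * (p∘ρ). Then there is a constant C depending only on sup_{[a,b]} |p''| such that for almost every x ∈ ℝ^N and every ε > 0, |p(ρ^ε(x)) − (p∘ρ)^ε(x)| ≤ C [ (ρ(x) − ρ^ε(x))² + ∫_{ℝ^N} η^ε(ξ) (ρ(x) − ρ(x−ξ))² dξ ]. -/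
open MeasureTheory
open scoped ENNReal

/-- Quadratic Taylor-type bound for a `C²` function on `[a,b]`. -/
private lemma quad_taylor {a b : ℝ} (hab : a ≤ b) {p : ℝ → ℝ}
    (hp : ContDiffOn ℝ 2 p (Set.Icc a b)) :
    ∃ M : ℝ, ∃ q : ℝ → ℝ, 0 ≤ M ∧ ∀ u ∈ Set.Icc a b, ∀ v ∈ Set.Icc a b,
      |p v - p u - q u * (v - u)| ≤ M * (v - u) ^ 2 := by
  rcases hab.eq_or_lt with rfl | hlt
  · refine ⟨0, fun _ => 0, le_rfl, ?_⟩
    intro u hu v hv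
    have hu' : u = a := le_antisymm hu.2 hu.1
    have hv' : v = a := le_antisymm hv.2 hv.1
    subst hu'; subst hv'; simp
  · have hud : UniqueDiffOn ℝ (Set.Icc a b) := uniqueDiffOn_Icc hlt
    set p₁ := derivWithin p (Set.Icc a b) with hp₁def
    have hp₁ : ContDiffOn ℝ 1 p₁ (Set.Icc a b) := hp.derivWithin hud (by norm_num)
    set p₂ := derivWithin p₁ (Set.Icc a b) with hp₂def
    have hp₂c : ContinuousOn p₂ (Set.Icc a b) :=
      (hp₁.derivWithin (m := 0) hud (by norm_num)).continuousOn
    obtain ⟨C0, hC0⟩ := isCompact_Icc.exists_bound_of_continuousOn hp₂c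
    set M := max C0 0 with hMdef
    have hM0 : 0 ≤ M := le_max_right _ _
    have hderiv1 : ∀ t ∈ Set.Icc a b, HasDerivWithinAt p (p₁ t) (Set.Icc a b) t :=
      fun t ht => (hp.differentiableOn (by norm_num) t ht).hasDerivWithinAt
    have hderiv2 : ∀ t ∈ Set.Icc a b, HasDerivWithinAt p₁ (p₂ t) (Set.Icc a b) t :=
      fun t ht => (hp₁.differentiableOn one_ne_zero t ht).hasDerivWithinAt
    have hLip : ∀ u ∈ Set.Icc a b, ∀ v ∈ Set.Icc a b, |p₁ v - p₁ u| ≤ M * |v - u| := by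
      intro u hu v hv
      have := (convex_Icc a b).norm_image_sub_le_of_norm_hasDerivWithin_le hderiv2
        (fun t ht => (hC0 t ht).trans (le_max_left C0 0)) hu hv
      simpa [Real.norm_eq_abs] using this
    refine ⟨M, p₁, hM0, ?_⟩
    intro u hu v hv
    set s := Set.Icc (min u v) (max u v) with hsdef
    have hs_sub : s ⊆ Set.Icc a b := Set.Icc_subset_Icc (le_min hu.1 hv.1) (max_le hu.2 hv.2)
    have hus : u ∈ s := ⟨min_le_left _ _, le_max_left _ _⟩
    have hvs : v ∈ s := ⟨min_le_right _ _, le_max_right _ _⟩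
    have hf : ∀ t ∈ s, HasDerivWithinAt (fun t => p t - p₁ u * t) (p₁ t - p₁ u) s t := by
      intro t ht
      have := ((hderiv1 t (hs_sub ht)).mono hs_sub).sub
        ((hasDerivWithinAt_id t s).const_mul (p₁ u))
      simp only [id_eq, mul_one] at this; exact this
    have hbound : ∀ t ∈ s, ‖p₁ t - p₁ u‖ ≤ M * |v - u| := by
      intro t ht
      have h1 : |p₁ t - p₁ u| ≤ M * |t - u| := hLip u hu t (hs_sub ht)
      have h2 : |t - u| ≤ |v - u| := by
        rw [abs_sub_le_iff]
        have hmm : max u v - min u v = |v - u| := by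
          rw [max_sub_min_eq_abs, abs_sub_comm]
        constructor
        · calc t - u ≤ max u v - min u v := sub_le_sub ht.2 (min_le_left _ _)
            _ = |v - u| := hmm
        · calc u - t ≤ max u v - min u v := sub_le_sub (le_max_left _ _) ht.1
            _ = |v - u| := hmm
      calc ‖p₁ t - p₁ u‖ = |p₁ t - p₁ u| := Real.norm_eq_abs _
        _ ≤ M * |t - u| := h1
        _ ≤ M * |v - u| := mul_le_mul_of_nonneg_left h2 hM0
    have hnorm := (convex_Icc (min u v) (max u v)).norm_image_sub_le_of_norm_hasDerivWithin_le
      hf hbound hus hvs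
    have heq : (fun t => p t - p₁ u * t) v - (fun t => p t - p₁ u * t) u
        = p v - p u - p₁ u * (v - u) := by ring
    rw [heq, Real.norm_eq_abs, Real.norm_eq_abs] at hnorm
    calc |p v - p u - p₁ u * (v - u)| ≤ M * |v - u| * |v - u| := hnorm
      _ = M * (v - u) ^ 2 := by rw [mul_assoc, abs_mul_abs_self, sq]

/-- Pressure commutator estimate: if `p ∈ C²([a,b])` and `ρ` takes values in
`[a,b]`, then there is a constant `C` depending only on `sup_{[a,b]} |p''|` such that for every
`ε > 0` and a.e. `x`,
`|p(ρ^ε(x)) − (p∘ρ)^ε(x)| ≤ C [ (ρ(x) − ρ^ε(x))² + ∫ η^ε(ξ)(ρ(x) − ρ(x−ξ))² dξ ]`. -/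
theorem pressure_commutator_pointwise
    {N : ℕ} (a b : ℝ) (hab : a ≤ b) (p : ℝ → ℝ)
    (hp : ContDiffOn ℝ 2 p (Set.Icc a b))
    (η : EuclideanSpace ℝ (Fin N) → ℝ)
    (hηsmooth : ContDiff ℝ (⊤ : ℕ∞) η) (hηcomp : HasCompactSupport η)
    (hηpos : ∀ x, 0 ≤ η x) (hηint : ∫ x, η x = 1) :
    ∃ C : ℝ, 0 < C ∧
      ∀ ρ : EuclideanSpace ℝ (Fin N) → ℝ, Measurable ρ →
        (∀ x, ρ x ∈ Set.Icc a b) →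
      ∀ ε : ℝ, 0 < ε →
        ∀ᵐ x : EuclideanSpace ℝ (Fin N) ∂volume,
          |p (mollify η ε ρ x) - mollify η ε (fun y => p (ρ y)) x| ≤
            C * ((ρ x - mollify η ε ρ x) ^ 2 +
              ∫ ξ, mollKernel η ε ξ * (ρ x - ρ (x - ξ)) ^ 2) := by
  obtain ⟨M, q, hM0, hTay⟩ := quad_taylor hab hp
  obtain ⟨B, hB⟩ := isCompact_Icc.exists_bound_of_continuousOn hp.continuousOn
  refine ⟨M + 1, by linarith, ?_⟩
  intro ρ hρ hρab ε hε
  have hεne : ε ≠ 0 := ne_of_gt hε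
  -- kernel facts
  have hKcont : Continuous (mollKernel η ε) :=
    continuous_const.mul (hηsmooth.continuous.comp (continuous_const_smul ε⁻¹))
  have hKcs : HasCompactSupport (mollKernel η ε) := by
    have h1 : HasCompactSupport fun y : EuclideanSpace ℝ (Fin N) => η (ε⁻¹ • y) :=
      hηcomp.comp_homeomorph (Homeomorph.smulOfNeZero ε⁻¹ (inv_ne_zero hεne))
    exact h1.mul_left
  have hKnn : ∀ ξ, 0 ≤ mollKernel η ε ξ :=
    fun ξ => mul_nonneg (pow_nonneg (inv_nonneg.2 hε.le) N) (hηpos _)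
  have hKint : Integrable (mollKernel η ε) := hKcont.integrable_of_hasCompactSupport hKcs
  have hK1 : ∫ ξ, mollKernel η ε ξ = 1 := by
    have h2 : ∫ ξ : EuclideanSpace ℝ (Fin N), η (ε⁻¹ • ξ) = ε ^ N := by
      rw [Measure.integral_comp_inv_smul volume η ε, hηint, finrank_euclideanSpace_fin, smul_eq_mul,
        mul_one, abs_of_nonneg (pow_nonneg hε.le _)]
    calc ∫ ξ, mollKernel η ε ξ = ∫ ξ : EuclideanSpace ℝ (Fin N), ε⁻¹ ^ N * η (ε⁻¹ • ξ) := rfl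
      _ = ε⁻¹ ^ N * ∫ ξ : EuclideanSpace ℝ (Fin N), η (ε⁻¹ • ξ) := integral_const_mul _ _
      _ = 1 := by rw [h2, inv_pow, inv_mul_cancel₀ (pow_ne_zero _ hεne)]
  -- integrability helper
  have key : ∀ (f : EuclideanSpace ℝ (Fin N) → ℝ) (R : ℝ), Measurable f → (∀ ξ, |f ξ| ≤ R) →
      Integrable (fun ξ => mollKernel η ε ξ * f ξ) := by
    intro f R hf hfR
    have := hKint.bdd_mul (c := R) hf.aestronglyMeasurable (Filter.Eventually.of_forall (by simpa [Real.norm_eq_abs] using hfR))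
    simpa [mul_comm] using this
  refine Filter.Eventually.of_forall (fun x => ?_)
  have hsub : Measurable fun ξ : EuclideanSpace ℝ (Fin N) => x - ξ :=
    measurable_const.sub measurable_id
  have hρx : Measurable fun ξ => ρ (x - ξ) := hρ.comp hsub
  have hpρ : Measurable fun ξ => p (ρ (x - ξ)) := by
    have hclamp : Continuous fun t : ℝ => max a (min b t) :=
      continuous_const.max (continuous_const.min continuous_id)
    have hmem : ∀ t, max a (min b t) ∈ Set.Icc a b :=
      fun t => ⟨le_max_left _ _, max_le hab (min_le_left _ _)⟩
    have hptilde : Continuous fun t => p (max a (min b t)) :=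
      hp.continuousOn.comp_continuous hclamp hmem
    have heq : (fun ξ => p (ρ (x - ξ))) = fun ξ => p (max a (min b (ρ (x - ξ)))) := by
      funext ξ
      have h := hρab (x - ξ)
      rw [min_eq_right h.2, max_eq_right h.1]
    rw [heq]
    exact hptilde.measurable.comp hρx
  have habs : ∀ t ∈ Set.Icc a b, |t| ≤ max |a| |b| := by
    intro t ht
    refine abs_le.2 ⟨?_, ?_⟩
    · have := neg_abs_le a; have := le_max_left |a| |b|; linarith [ht.1]
    · have := le_abs_self b; have := le_max_right |a| |b|; linarith [ht.2]
  have I1 : Integrable (fun ξ => mollKernel η ε ξ * ρ (x - ξ)) :=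
    key _ (max |a| |b|) hρx (fun ξ => habs _ (hρab _))
  have I2 : Integrable (fun ξ => mollKernel η ε ξ * p (ρ (x - ξ))) := by
    refine key _ B hpρ (fun ξ => ?_)
    have := hB _ (hρab (x - ξ)); rwa [Real.norm_eq_abs] at this
  have I3 : Integrable (fun ξ => mollKernel η ε ξ * (ρ x - ρ (x - ξ)) ^ 2) := by
    refine key _ ((b - a) ^ 2) ((measurable_const.sub hρx).pow_const 2) (fun ξ => ?_)
    have h1 := hρab x; have h2 := hρab (x - ξ)
    rw [abs_of_nonneg (sq_nonneg _)]
    nlinarith [h1.1, h1.2, h2.1, h2.2]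
  have hmoll : mollify η ε ρ x = ∫ ξ, mollKernel η ε ξ * ρ (x - ξ) := rfl
  have hrεmem : mollify η ε ρ x ∈ Set.Icc a b := by
    constructor
    · have h1 : ∫ ξ, mollKernel η ε ξ * a ≤ ∫ ξ, mollKernel η ε ξ * ρ (x - ξ) :=
        integral_mono (hKint.mul_const a) I1
          (fun ξ => mul_le_mul_of_nonneg_left (hρab _).1 (hKnn ξ))
      calc a = ∫ ξ, mollKernel η ε ξ * a := by rw [integral_mul_const, hK1, one_mul]
        _ ≤ _ := h1.trans_eq hmoll.symm
    · have h1 : ∫ ξ, mollKernel η ε ξ * ρ (x - ξ) ≤ ∫ ξ, mollKernel η ε ξ * b :=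
        integral_mono I1 (hKint.mul_const b)
          (fun ξ => mul_le_mul_of_nonneg_left (hρab _).2 (hKnn ξ))
      calc mollify η ε ρ x = ∫ ξ, mollKernel η ε ξ * ρ (x - ξ) := hmoll
        _ ≤ ∫ ξ, mollKernel η ε ξ * b := h1
        _ = b := by rw [integral_mul_const, hK1, one_mul]
  have hc : ρ x ∈ Set.Icc a b := hρab x
  set g : EuclideanSpace ℝ (Fin N) → ℝ :=
    fun ξ => p (ρ (x - ξ)) - p (ρ x) - q (ρ x) * (ρ (x - ξ) - ρ x) with hgdef
  have hgbd : ∀ ξ, |g ξ| ≤ M * (ρ x - ρ (x - ξ)) ^ 2 := by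
    intro ξ
    have h := hTay (ρ x) hc (ρ (x - ξ)) (hρab _)
    calc |g ξ| ≤ M * (ρ (x - ξ) - ρ x) ^ 2 := h
      _ = M * (ρ x - ρ (x - ξ)) ^ 2 := by ring
  have IB : Integrable (fun ξ => p (ρ x) * mollKernel η ε ξ) := hKint.const_mul _
  have IC : Integrable (fun ξ =>
      q (ρ x) * (mollKernel η ε ξ * ρ (x - ξ) - ρ x * mollKernel η ε ξ)) :=
    (I1.sub (hKint.const_mul _)).const_mul _
  have Ig : Integrable (fun ξ => mollKernel η ε ξ * g ξ) := by
    have heq : (fun ξ => mollKernel η ε ξ * g ξ) =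
        fun ξ => mollKernel η ε ξ * p (ρ (x - ξ)) - p (ρ x) * mollKernel η ε ξ
          - q (ρ x) * (mollKernel η ε ξ * ρ (x - ξ) - ρ x * mollKernel η ε ξ) := by
      funext ξ; simp only [hgdef]; ring
    rw [heq]
    exact (I2.sub IB).sub IC
  have hsplit : mollify η ε (fun y => p (ρ y)) x
      = (∫ ξ, mollKernel η ε ξ * g ξ) + p (ρ x) + q (ρ x) * (mollify η ε ρ x - ρ x) := by
    have heq : (fun ξ => mollKernel η ε ξ * p (ρ (x - ξ)))
        = fun ξ => mollKernel η ε ξ * g ξ + (p (ρ x) * mollKernel η ε ξ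
            + q (ρ x) * (mollKernel η ε ξ * ρ (x - ξ) - ρ x * mollKernel η ε ξ)) := by
      funext ξ; simp only [hgdef]; ring
    have IBC : Integrable (fun ξ => p (ρ x) * mollKernel η ε ξ
        + q (ρ x) * (mollKernel η ε ξ * ρ (x - ξ) - ρ x * mollKernel η ε ξ)) := IB.add IC
    show (∫ ξ, mollKernel η ε ξ * p (ρ (x - ξ))) = _
    rw [heq, integral_add Ig IBC, integral_add IB IC, integral_const_mul,
      integral_const_mul, integral_sub I1 (hKint.const_mul _), integral_const_mul, hK1, hmoll]
    ring
  have hquad1 : |p (mollify η ε ρ x) - p (ρ x) - q (ρ x) * (mollify η ε ρ x - ρ x)|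
      ≤ M * (ρ x - mollify η ε ρ x) ^ 2 := by
    have h := hTay (ρ x) hc (mollify η ε ρ x) hrεmem
    calc |p (mollify η ε ρ x) - p (ρ x) - q (ρ x) * (mollify η ε ρ x - ρ x)|
        ≤ M * (mollify η ε ρ x - ρ x) ^ 2 := h
      _ = M * (ρ x - mollify η ε ρ x) ^ 2 := by ring
  have hIg : |∫ ξ, mollKernel η ε ξ * g ξ| ≤ M * ∫ ξ, mollKernel η ε ξ * (ρ x - ρ (x - ξ)) ^ 2 := by
    calc |∫ ξ, mollKernel η ε ξ * g ξ| ≤ ∫ ξ, |mollKernel η ε ξ| * |g ξ| := by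
          simpa [Real.norm_eq_abs] using
            norm_integral_le_integral_norm (μ := volume) (fun ξ => mollKernel η ε ξ * g ξ)
      _ ≤ ∫ ξ, M * (mollKernel η ε ξ * (ρ x - ρ (x - ξ)) ^ 2) := by
          have Iabs : Integrable (fun ξ => |mollKernel η ε ξ| * |g ξ|) := by
            simpa [abs_mul] using Ig.abs
          refine integral_mono Iabs (I3.const_mul M) (fun ξ => ?_)
          rw [abs_of_nonneg (hKnn ξ)]
          calc mollKernel η ε ξ * |g ξ|
              ≤ mollKernel η ε ξ * (M * (ρ x - ρ (x - ξ)) ^ 2) :=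
                mul_le_mul_of_nonneg_left (hgbd ξ) (hKnn ξ)
            _ = M * (mollKernel η ε ξ * (ρ x - ρ (x - ξ)) ^ 2) := by ring
      _ = M * ∫ ξ, mollKernel η ε ξ * (ρ x - ρ (x - ξ)) ^ 2 := integral_const_mul _ _
  have hInn : 0 ≤ ∫ ξ, mollKernel η ε ξ * (ρ x - ρ (x - ξ)) ^ 2 :=
    integral_nonneg (fun ξ => mul_nonneg (hKnn ξ) (sq_nonneg _))
  have hstep : |p (mollify η ε ρ x) - mollify η ε (fun y => p (ρ y)) x|
      ≤ M * (ρ x - mollify η ε ρ x) ^ 2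
        + M * ∫ ξ, mollKernel η ε ξ * (ρ x - ρ (x - ξ)) ^ 2 := by
    calc |p (mollify η ε ρ x) - mollify η ε (fun y => p (ρ y)) x|
        = |(p (mollify η ε ρ x) - p (ρ x) - q (ρ x) * (mollify η ε ρ x - ρ x))
            - ∫ ξ, mollKernel η ε ξ * g ξ| := by rw [hsplit]; congr 1; ring
      _ ≤ |p (mollify η ε ρ x) - p (ρ x) - q (ρ x) * (mollify η ε ρ x - ρ x)|
            + |∫ ξ, mollKernel η ε ξ * g ξ| := abs_sub _ _
      _ ≤ _ := add_le_add hquad1 hIg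
  have hsq : 0 ≤ (ρ x - mollify η ε ρ x) ^ 2 := sq_nonneg _
  nlinarith [hstep]
end

section
/- Let (ρ_n), (m_n) be sequences of measurable functions on the torus 𝕋^d and ρ, m measurable on 𝕋^d, with values ρ_n, ρ ∈ [0, R] for some R > 0, and suppose there is K > 0 with |m_n(x)| ≤ K ρ_n(x) and |m(x)| ≤ K ρ(x) for a.e. x. If ρ_n → ρ in L^1(𝕋^d) and m_n → m in L^1(𝕋^d), then the kinetic energy densities converge: 1_{ρ_n > 0} |m_n|²/ρ_n → 1_{ρ > 0} |m|²/ρ in L^1(𝕋^d). -/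
/-!
The kinetic energy `(a, p) ↦ ‖p‖² / a` is a perspective function, hence convex on `a > 0`, and its
gradient `(-‖p‖² / a², 2 p / a)` is bounded by `(K², 2K)` on the cone `‖p‖ ≤ K a`. The tangent
inequality thus gives the pointwise estimate
`|‖pₙ‖² / aₙ - ‖p‖² / a| ≤ K² |aₙ - a| + 2K ‖pₙ - p‖` on the cone, including its
vertex `a = 0`, where the energy is `0`. Hence `L¹` convergence of `aₙ` and `pₙ` gives that of
the densities.
-/

open MeasureTheory Filter
open scoped ENNReal Topology RealInnerProductSpace

section

variable {E : Type*} [NormedAddCommGroup E] [InnerProductSpace ℝ E]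

/-- `‖b • p - a • q‖² ≥ 0` divided by `a² b`. -/
lemma norm_sq_div_sub_norm_sq_div_le_tangent {a b : ℝ} (ha : 0 < a) (hb : 0 < b) (p q : E) :
    ‖p‖ ^ 2 / a - ‖q‖ ^ 2 / b ≤ (b - a) * (‖p‖ / a) ^ 2 + 2 * ⟪p, p - q⟫ / a := by
  have hsq : 0 ≤ ‖b • p - a • q‖ ^ 2 / (a ^ 2 * b) := by positivity
  rw [norm_sub_sq_real, norm_smul, norm_smul, real_inner_smul_left, real_inner_smul_right,
    Real.norm_of_nonneg ha.le, Real.norm_of_nonneg hb.le] at hsq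
  rw [inner_sub_right, real_inner_self_eq_norm_sq, ← sub_nonneg]
  convert hsq using 1
  field_simp
  ring

lemma norm_sq_div_sub_norm_sq_div_le {K a b : ℝ} (hK : 0 ≤ K) (ha : 0 ≤ a) (hb : 0 ≤ b)
    {p : E} (hp : ‖p‖ ≤ K * a) (q : E) :
    ‖p‖ ^ 2 / a - ‖q‖ ^ 2 / b ≤ K ^ 2 * |a - b| + 2 * K * ‖p - q‖ := by
  have hRHS : 0 ≤ K ^ 2 * |a - b| + 2 * K * ‖p - q‖ := by positivity
  rcases ha.eq_or_lt with rfl | ha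
  · rw [div_zero, zero_sub]
    exact (neg_nonpos.2 (by positivity)).trans hRHS
  have hpa : ‖p‖ / a ≤ K := (div_le_iff₀ ha).2 (by linarith)
  rcases hb.eq_or_lt with rfl | hb
  · calc ‖p‖ ^ 2 / a - ‖q‖ ^ 2 / 0 = a * (‖p‖ / a) ^ 2 := by rw [div_zero, sub_zero]; field_simp
      _ ≤ a * K ^ 2 := by gcongr
      _ ≤ K ^ 2 * |a - 0| + 2 * K * ‖p - q‖ := by
        rw [sub_zero, abs_of_pos ha]; nlinarith [norm_nonneg (p - q)]
  calc ‖p‖ ^ 2 / a - ‖q‖ ^ 2 / b ≤ (b - a) * (‖p‖ / a) ^ 2 + 2 * ⟪p, p - q⟫ / a :=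
        norm_sq_div_sub_norm_sq_div_le_tangent ha hb p q
    _ ≤ |a - b| * K ^ 2 + 2 * (‖p‖ * ‖p - q‖) / a := by
        gcongr ?_ + 2 * ?_ / a
        · exact mul_le_mul (abs_sub_comm a b ▸ le_abs_self _) (by gcongr) (sq_nonneg _)
            (abs_nonneg _)
        · exact real_inner_le_norm p (p - q)
    _ ≤ K ^ 2 * |a - b| + 2 * K * ‖p - q‖ := by
        rw [mul_comm |a - b|, mul_div_assoc, mul_div_right_comm, ← mul_assoc]
        gcongr

lemma abs_norm_sq_div_sub_norm_sq_div_le {K a b : ℝ} (hK : 0 ≤ K) (ha : 0 ≤ a) (hb : 0 ≤ b)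
    {p q : E} (hp : ‖p‖ ≤ K * a) (hq : ‖q‖ ≤ K * b) :
    |‖p‖ ^ 2 / a - ‖q‖ ^ 2 / b| ≤ K ^ 2 * |a - b| + 2 * K * ‖p - q‖ := by
  rw [abs_sub_le_iff]
  refine ⟨norm_sq_div_sub_norm_sq_div_le hK ha hb hp q, ?_⟩
  simpa only [abs_sub_comm b, norm_sub_rev q] using norm_sq_div_sub_norm_sq_div_le hK hb ha hq p

variable {α : Type*} [MeasurableSpace α] {μ : Measure α} {p : ℝ≥0∞} {K : ℝ}

lemma eLpNorm_norm_sq_div_sub_norm_sq_div_le (hp : 1 ≤ p) (hK : 0 ≤ K) {f g : α → ℝ}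
    {F G : α → E} (hf : AEStronglyMeasurable f μ) (hg : AEStronglyMeasurable g μ)
    (hF : AEStronglyMeasurable F μ) (hG : AEStronglyMeasurable G μ)
    (hf₀ : ∀ᵐ x ∂μ, 0 ≤ f x) (hg₀ : ∀ᵐ x ∂μ, 0 ≤ g x)
    (hFf : ∀ᵐ x ∂μ, ‖F x‖ ≤ K * f x) (hGg : ∀ᵐ x ∂μ, ‖G x‖ ≤ K * g x) :
    eLpNorm (fun x => ‖F x‖ ^ 2 / f x - ‖G x‖ ^ 2 / g x) p μ ≤
      ENNReal.ofReal (K ^ 2) * eLpNorm (fun x => f x - g x) p μ +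
        ENNReal.ofReal (2 * K) * eLpNorm (fun x => F x - G x) p μ := by
  calc eLpNorm (fun x => ‖F x‖ ^ 2 / f x - ‖G x‖ ^ 2 / g x) p μ
      ≤ eLpNorm ((K ^ 2) • (fun x => ‖f x - g x‖) + (2 * K) • (fun x => ‖F x - G x‖)) p μ := by
        refine eLpNorm_mono_ae_real ?_
        filter_upwards [hf₀, hg₀, hFf, hGg] with x hfx hgx hFx hGx
        simpa [Real.norm_eq_abs] using abs_norm_sq_div_sub_norm_sq_div_le hK hfx hgx hFx hGx
    _ ≤ _ := eLpNorm_add_le (((hf.sub hg).norm).const_smul _) (((hF.sub hG).norm).const_smul _) hp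
    _ = _ := by
        rw [eLpNorm_const_smul, eLpNorm_const_smul, eLpNorm_norm, eLpNorm_norm,
          Real.enorm_eq_ofReal (by positivity), Real.enorm_eq_ofReal (by positivity)]

lemma tendsto_eLpNorm_norm_sq_div_sub_norm_sq_div {ι : Type*} {l : Filter ι} (hp : 1 ≤ p)
    (hK : 0 ≤ K) {fn : ι → α → ℝ} {Fn : ι → α → E} {f : α → ℝ} {F : α → E}
    (hfn : ∀ n, AEStronglyMeasurable (fn n) μ) (hFn : ∀ n, AEStronglyMeasurable (Fn n) μ)
    (hf : AEStronglyMeasurable f μ) (hF : AEStronglyMeasurable F μ)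
    (hfn₀ : ∀ n, ∀ᵐ x ∂μ, 0 ≤ fn n x) (hf₀ : ∀ᵐ x ∂μ, 0 ≤ f x)
    (hFfn : ∀ n, ∀ᵐ x ∂μ, ‖Fn n x‖ ≤ K * fn n x) (hFf : ∀ᵐ x ∂μ, ‖F x‖ ≤ K * f x)
    (hfconv : Tendsto (fun n => eLpNorm (fun x => fn n x - f x) p μ) l (𝓝 0))
    (hFconv : Tendsto (fun n => eLpNorm (fun x => Fn n x - F x) p μ) l (𝓝 0)) :
    Tendsto (fun n => eLpNorm (fun x => ‖Fn n x‖ ^ 2 / fn n x - ‖F x‖ ^ 2 / f x) p μ) l (𝓝 0) := by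
  have hbound : Tendsto (fun n => ENNReal.ofReal (K ^ 2) * eLpNorm (fun x => fn n x - f x) p μ +
      ENNReal.ofReal (2 * K) * eLpNorm (fun x => Fn n x - F x) p μ) l (𝓝 0) := by
    simpa only [mul_zero, add_zero] using
      (ENNReal.Tendsto.const_mul hfconv (.inr (ENNReal.ofReal_ne_top (r := K ^ 2)))).add
        (ENNReal.Tendsto.const_mul hFconv (.inr (ENNReal.ofReal_ne_top (r := 2 * K))))
  exact tendsto_of_tendsto_of_tendsto_of_le_of_le tendsto_const_nhds hbound (fun _ => zero_le)
    fun n => eLpNorm_norm_sq_div_sub_norm_sq_div_le hp hK (hfn n) hf (hFn n) hF (hfn₀ n) hf₀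
      (hFfn n) hFf

end

-- Since `h x / 0 = 0`, the indicator only matters where `f x < 0`.
lemma indicator_pos_div_of_nonneg {α : Type*} {f h : α → ℝ} {x : α} (hx : 0 ≤ f x) :
    Set.indicator {y | 0 < f y} (fun y => h y / f y) x = h x / f x := by
  rcases hx.eq_or_lt with hx | hx
  · simp [← hx]
  · simp [hx]

theorem kinetic_energy_density_L1_convergence_general
    {d : ℕ}
    (ρn : ℕ → (Fin d → AddCircle (1 : ℝ)) → ℝ)
    (mn : ℕ → (Fin d → AddCircle (1 : ℝ)) → EuclideanSpace ℝ (Fin d))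
    (ρ : (Fin d → AddCircle (1 : ℝ)) → ℝ)
    (m : (Fin d → AddCircle (1 : ℝ)) → EuclideanSpace ℝ (Fin d))
    (hρnm : ∀ n, AEStronglyMeasurable (ρn n) volume)
    (hmnm : ∀ n, AEStronglyMeasurable (mn n) volume)
    (hρm : AEStronglyMeasurable ρ volume) (hmm : AEStronglyMeasurable m volume)
    (R : ℝ)
    (hρnbd : ∀ n, ∀ᵐ x ∂volume, ρn n x ∈ Set.Icc 0 R)
    (hρbd : ∀ᵐ x ∂volume, ρ x ∈ Set.Icc 0 R)
    (K : ℝ) (hK : 0 < K)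
    (hmnbd : ∀ n, ∀ᵐ x ∂volume, ‖mn n x‖ ≤ K * ρn n x)
    (hmbd : ∀ᵐ x ∂volume, ‖m x‖ ≤ K * ρ x)
    (hρconv : Tendsto (fun n => eLpNorm (fun x => ρn n x - ρ x) 1 volume) atTop (𝓝 0))
    (hmconv : Tendsto (fun n => eLpNorm (fun x => mn n x - m x) 1 volume) atTop (𝓝 0)) :
    Tendsto (fun n => eLpNorm (fun x =>
        Set.indicator {y | 0 < ρn n y} (fun y => ‖mn n y‖ ^ 2 / ρn n y) x -
        Set.indicator {y | 0 < ρ y} (fun y => ‖m y‖ ^ 2 / ρ y) x) 1 volume)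
      atTop (𝓝 0) := by
  have hρn₀ n : ∀ᵐ x ∂volume, 0 ≤ ρn n x := (hρnbd n).mono fun _ hx => hx.1
  have hρ₀ : ∀ᵐ x ∂volume, 0 ≤ ρ x := hρbd.mono fun _ hx => hx.1
  refine (tendsto_eLpNorm_norm_sq_div_sub_norm_sq_div le_rfl hK.le hρnm hmnm hρm hmm hρn₀ hρ₀
    hmnbd hmbd hρconv hmconv).congr fun n => eLpNorm_congr_ae ?_
  filter_upwards [hρn₀ n, hρ₀] with x hρnx hρx
  rw [indicator_pos_div_of_nonneg hρnx, indicator_pos_div_of_nonneg hρx]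

/-- Strong `L¹` continuity of the kinetic energy density: if `ρ_n → ρ` and
`m_n → m` in `L¹(𝕋^d)`, with `0 ≤ ρ_n, ρ ≤ R` and `|m_n| ≤ K ρ_n`, `|m| ≤ K ρ` a.e., then
`1_{ρ_n > 0} |m_n|²/ρ_n → 1_{ρ > 0} |m|²/ρ` in `L¹(𝕋^d)`. -/
theorem kinetic_energy_density_L1_convergence
    {d : ℕ}
    (ρn : ℕ → (Fin d → AddCircle (1 : ℝ)) → ℝ)
    (mn : ℕ → (Fin d → AddCircle (1 : ℝ)) → EuclideanSpace ℝ (Fin d))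
    (ρ : (Fin d → AddCircle (1 : ℝ)) → ℝ)
    (m : (Fin d → AddCircle (1 : ℝ)) → EuclideanSpace ℝ (Fin d))
    (hρnm : ∀ n, AEStronglyMeasurable (ρn n) volume)
    (hmnm : ∀ n, AEStronglyMeasurable (mn n) volume)
    (hρm : AEStronglyMeasurable ρ volume) (hmm : AEStronglyMeasurable m volume)
    (R : ℝ) (hR : 0 < R)
    (hρnbd : ∀ n, ∀ᵐ x ∂volume, ρn n x ∈ Set.Icc 0 R)
    (hρbd : ∀ᵐ x ∂volume, ρ x ∈ Set.Icc 0 R)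
    (K : ℝ) (hK : 0 < K)
    (hmnbd : ∀ n, ∀ᵐ x ∂volume, ‖mn n x‖ ≤ K * ρn n x)
    (hmbd : ∀ᵐ x ∂volume, ‖m x‖ ≤ K * ρ x)
    (hρconv : Tendsto (fun n => eLpNorm (fun x => ρn n x - ρ x) 1 volume) atTop (𝓝 0))
    (hmconv : Tendsto (fun n => eLpNorm (fun x => mn n x - m x) 1 volume) atTop (𝓝 0)) :
    Tendsto (fun n => eLpNorm (fun x =>
        Set.indicator {y | 0 < ρn n y} (fun y => ‖mn n y‖ ^ 2 / ρn n y) x -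
        Set.indicator {y | 0 < ρ y} (fun y => ‖m y‖ ^ 2 / ρ y) x) 1 volume)
      atTop (𝓝 0) :=
  kinetic_energy_density_L1_convergence_general ρn mn ρ m hρnm hmnm hρm hmm R hρnbd hρbd K hK hmnbd
    hmbd hρconv hmconv
end
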